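/- Fix γ ≥ 3 and set ε_n = log n / n^{1/(γ−1)}. Let X_γ be the number of dominating γ-sets in G(n, 1−ε_n). Then Var(X_γ) = O(n^{2γ−1}), and consequently by Chebyshev's inequality, with probability tending to 1, X_γ ≥ C(n,γ) − O(log^γ n · n^{γ − 1/(γ−1)}). -/

import Mathlib

open MeasureTheory Filter
open scoped ENNReal NNReal

def Dominates {V : Type*} (G : SimpleGraph V) (S : Finset V) : Prop :=
  ∀ v ∉ S, ∃ u ∈ S, G.Adj u v

noncomputable def domCount {V : Type*} [Fintype V] (G : SimpleGraph V) (k : ℕ) : ℕ :=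
  letI : DecidablePred (fun S : Finset V => Dominates G S) := Classical.decPred _
  ((Finset.powersetCard k Finset.univ).filter (fun S => Dominates G S)).card

noncomputable def nonDomCount {V : Type*} [Fintype V] (G : SimpleGraph V) (k : ℕ) : ℕ :=
  letI : DecidablePred (fun S : Finset V => Dominates G S) := Classical.decPred _
  ((Finset.powersetCard k Finset.univ).filter (fun S => ¬ Dominates G S)).card

noncomputable def domNum {V : Type*} [Fintype V] (G : SimpleGraph V) : ℕ :=
  sInf {k | ∃ S : Finset V, S.card = k ∧ Dominates G S}

def graphOf {n : ℕ} (σ : Sym2 (Fin n) → Bool) : SimpleGraph (Fin n) where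
  Adj i j := i ≠ j ∧ σ s(i, j) = true
  symm := by
    constructor
    intro i j h
    exact ⟨h.1.symm, by rw [Sym2.eq_swap]; exact h.2⟩
  loopless := by constructor; intro i h; exact h.1 rfl

noncomputable def erMeasure (n : ℕ) (p : ℝ≥0∞) (h : p ≤ 1) :
    Measure (Sym2 (Fin n) → Bool) :=
  Measure.pi fun _ => (PMF.bernoulli p.toNNReal (by simpa using ENNReal.toNNReal_mono ENNReal.one_ne_top h)).toMeasure

/-!
Write `X_γ = ∑_S 1[S dominates]` over the `γ`-sets `S`, and let `q = ε^γ` be the probability that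
a fixed vertex outside `S` has no neighbour in `S`. For `v ∉ S` the events "`v` has a neighbour in
`S`" depend on pairwise disjoint sets of edges, so `S` dominates with probability `(1 - q)^(n-γ)`;
for disjoint `S`, `T` the same argument bounds the probability that both dominate by
`(1 - q)^(2(n-2γ))`. Hence each of the at most `n^(2γ)` disjoint pairs adds at most
`1 - (1 - q)^(2γ) ≤ 2γq ≤ 2γ/n` to `Var X_γ = ∑_{S,T} (P(S, T dominate) - P(S) P(T))`, and each of
the at most `γ n^(2γ-1)` intersecting pairs adds at most `1`. Moreover
`C(n,γ) - E X_γ ≤ n^(γ+1) q = log^γ n · n^(γ-1/(γ-1)) =: L`, so Chebyshev's inequality bounds the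
probability of `X_γ < C(n,γ) - 2L` by `Var X_γ / L² ≤ 3γ / (n³ q²) ≤ 3γ / log^(2γ) n`, the last
step using `γ ≥ 3`.
-/

open ProbabilityTheory Finset Topology

section ProductIndependence

variable {ι : Type*} [Fintype ι] {α : ι → Type*} [∀ i, MeasurableSpace (α i)]
  [∀ i, MeasurableSingletonClass (α i)] [∀ i, Countable (α i)]
  (μ : ∀ i, Measure (α i)) [∀ i, IsProbabilityMeasure (μ i)]

theorem MeasureTheory.Measure.pi_inter_eq_mul_of_dependsOn {A B : Set (∀ i, α i)}
    {K L : Finset ι} (hKL : Disjoint K L) (hA : DependsOn (· ∈ A) K)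
    (hB : DependsOn (· ∈ B) L) :
    Measure.pi μ (A ∩ B) = Measure.pi μ A * Measure.pi μ B := by
  have hindep := (iIndepFun_pi (μ := μ) (X := fun _ => id) fun _ => aemeasurable_id)
    |>.indepFun_finset K L hKL fun i => measurable_pi_apply i
  have preimage_image {K : Finset ι} {A : Set (∀ i, α i)} (hA : DependsOn (· ∈ A) K) :
      (fun σ (i : K) => σ i) ⁻¹' ((fun σ (i : K) => σ i) '' A) = A := by
    refine Set.Subset.antisymm ?_ (Set.subset_preimage_image _ _)
    rintro σ ⟨τ, hτ, hστ⟩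
    exact (hA fun i hi => congrFun hστ ⟨i, hi⟩).mp hτ
  rw [← preimage_image hA, ← preimage_image hB]
  exact hindep.measure_inter_preimage_eq_mul _ _ (Set.to_countable _).measurableSet
    (Set.to_countable _).measurableSet

theorem MeasureTheory.Measure.pi_biInter_eq_prod_of_dependsOn {κ : Type*} (V : Finset κ)
    {E : κ → Finset ι} (hE : (V : Set κ).PairwiseDisjoint E) {A : κ → Set (∀ i, α i)}
    (hA : ∀ v ∈ V, DependsOn (· ∈ A v) (E v)) :
    Measure.pi μ (⋂ v ∈ V, A v) = ∏ v ∈ V, Measure.pi μ (A v) := by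
  classical
  induction V using Finset.induction_on with
  | empty => simp
  | @insert a V ha ih =>
    have hrest : DependsOn (· ∈ ⋂ v ∈ V, A v) (V.biUnion E) := by
      intro σ τ hστ
      simp only [Set.mem_iInter, eq_iff_iff]
      exact forall₂_congr fun v hv => Eq.to_iff <| hA v (Finset.mem_insert_of_mem hv)
        fun i hi => hστ i (Finset.mem_biUnion.2 ⟨v, hv, hi⟩)
    have hdisj : Disjoint (E a) (V.biUnion E) :=
      (Finset.disjoint_biUnion_right _ _ _).2 fun v hv =>
        hE (mem_insert_self a V) (mem_insert_of_mem hv) (ne_of_mem_of_not_mem hv ha).symm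
    rw [Finset.set_biInter_insert, Finset.prod_insert ha,
      Measure.pi_inter_eq_mul_of_dependsOn μ hdisj (hA a (Finset.mem_insert_self a V)) hrest,
      ih (hE.subset (by simp)) fun v hv => hA v (Finset.mem_insert_of_mem hv)]

end ProductIndependence

theorem Finset.card_filter_not_disjoint_le {α : Type*} [Fintype α] [DecidableEq α]
    (S : Finset α) (k : ℕ) :
    #{T ∈ powersetCard k univ | ¬Disjoint S T} ≤ #S * Fintype.card α ^ (k - 1) := by
  rcases Nat.eq_zero_or_pos k with rfl | hk
  · simp [filter_singleton]
  calc #{T ∈ powersetCard k univ | ¬Disjoint S T}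
      ≤ #(S.biUnion fun x => {T ∈ powersetCard k univ | {x} ⊆ T}) := by
        refine card_le_card fun T hT => ?_
        obtain ⟨hT, hST⟩ := mem_filter.1 hT
        obtain ⟨x, hxS, hxT⟩ := not_disjoint_iff.1 hST
        exact mem_biUnion.2 ⟨x, hxS, mem_filter.2 ⟨hT, singleton_subset_iff.2 hxT⟩⟩
    _ ≤ ∑ x ∈ S, #{T ∈ powersetCard k univ | {x} ⊆ T} := card_biUnion_le
    _ = ∑ _x ∈ S, (Fintype.card α - 1).choose (k - 1) := sum_congr rfl fun x _ => by
        rw [card_filter_powersetCard_subset _ _ _ (subset_univ _)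
          (by rw [card_singleton]; exact hk), card_singleton, card_univ]
    _ ≤ #S * Fintype.card α ^ (k - 1) := by
        rw [sum_const, smul_eq_mul]
        gcongr
        exact (Nat.choose_le_pow _ _).trans (Nat.pow_le_pow_left (Nat.sub_le _ _) _)

theorem ENNReal.toReal_one_sub_le_one (p : ℝ≥0∞) : (1 - p).toReal ≤ 1 :=
  ENNReal.toReal_le_of_le_ofReal zero_le_one (by simp)

theorem ENNReal.toReal_one_sub_one_sub_pow (p : ℝ≥0∞) (k : ℕ) :
    (1 - (1 - p) ^ k).toReal = 1 - (1 - p).toReal ^ k := by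
  rw [ENNReal.toReal_sub_of_le (pow_le_one' tsub_le_self k) ENNReal.one_ne_top,
    ENNReal.toReal_one, ENNReal.toReal_pow]

theorem ENNReal.toReal_one_sub_one_sub_ofReal {x : ℝ} (h0 : 0 ≤ x) (h1 : x ≤ 1) :
    (1 - (1 - ENNReal.ofReal x)).toReal = x := by
  rw [ENNReal.sub_sub_cancel ENNReal.one_ne_top (ENNReal.ofReal_le_one.2 h1),
    ENNReal.toReal_ofReal h0]

theorem ProbabilityTheory.one_sub_variance_div_sq_le_measureReal {Ω : Type*} [MeasurableSpace Ω]
    {μ : Measure Ω} [IsProbabilityMeasure μ] {X : Ω → ℝ} (hX : MemLp X 2 μ) {c t : ℝ}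
    (ht : 0 < t) (hc : c ≤ μ[X] - t) :
    1 - variance X μ / t ^ 2 ≤ μ.real {ω | c ≤ X ω} := by
  have hcover : Set.univ ⊆ {ω | c ≤ X ω} ∪ {ω | t ≤ |X ω - μ[X]|} := fun ω _ => by
    by_contra! h
    simp only [Set.mem_union, Set.mem_ofPred_eq, not_or, not_le] at h
    linarith [neg_abs_le (X ω - μ[X])]
  have htail : μ.real {ω | t ≤ |X ω - μ[X]|} ≤ variance X μ / t ^ 2 :=
    ENNReal.toReal_le_of_le_ofReal (by have := variance_nonneg X μ; positivity)
      (meas_ge_le_variance_div_sq hX ht)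
  have := (measureReal_mono (μ := μ) hcover (measure_ne_top _ _)).trans (measureReal_union_le _ _)
  rw [probReal_univ] at this
  linarith

namespace ErdosRenyi

variable {n : ℕ} {p : ℝ≥0∞} {hp : p ≤ 1}

instance : IsProbabilityMeasure (erMeasure n p hp) := by
  unfold erMeasure; infer_instance

theorem erMeasure_eq_false (e : Sym2 (Fin n)) :
    erMeasure n p hp {σ | σ e = false} = 1 - p := by
  rw [erMeasure, ← Set.preimage_ofPred_eq (p := (· = false)),
    (measurePreserving_eval _ e).measure_preimage MeasurableSet.of_discrete.nullMeasurableSet,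
    Set.ofPred_eq_eq_singleton, PMF.toMeasure_apply_singleton _ _ (measurableSet_singleton _)]
  change ((1 - p.toNNReal : ℝ≥0) : ℝ≥0∞) = 1 - p
  rw [ENNReal.coe_sub, ENNReal.coe_one,
    ENNReal.coe_toNNReal (ne_top_of_le_ne_top ENNReal.one_ne_top hp)]

theorem erMeasure_forall_eq_false (E : Finset (Sym2 (Fin n))) :
    erMeasure n p hp {σ | ∀ e ∈ E, σ e = false} = (1 - p) ^ #E := by
  classical
  have hset : {σ : Sym2 (Fin n) → Bool | ∀ e ∈ E, σ e = false}
      = ⋂ e ∈ E, {σ | σ e = false} := by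
    ext; simp
  rw [hset, ← prod_const, ← prod_congr rfl fun e _ => erMeasure_eq_false (hp := hp) e]
  exact Measure.pi_biInter_eq_prod_of_dependsOn _ E (E := fun e => {e})
    (fun _ _ _ _ h => Finset.disjoint_singleton.2 h) fun e _ σ τ h => by simp [h e (by simp)]

def edgesTo (S : Finset (Fin n)) (v : Fin n) : Finset (Sym2 (Fin n)) :=
  S.image (s(·, v))

def neighborEvent (S : Finset (Fin n)) (v : Fin n) : Set (Sym2 (Fin n) → Bool) :=
  {σ | ∃ u ∈ S, σ s(u, v) = true}

def dominatingEvent (S : Finset (Fin n)) : Set (Sym2 (Fin n) → Bool) :=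
  {σ | Dominates (graphOf σ) S}

theorem card_edgesTo {S : Finset (Fin n)} {v : Fin n} (hv : v ∉ S) :
    #(edgesTo S v) = #S :=
  Finset.card_image_of_injOn fun u hu u' _ h => by
    rcases Sym2.eq_iff.1 h with ⟨h, -⟩ | ⟨rfl, -⟩
    exacts [h, absurd hu hv]

theorem disjoint_edgesTo {S T : Finset (Fin n)} {v w : Fin n} (hvw : v ≠ w) (hv : v ∉ T) :
    Disjoint (edgesTo S v) (edgesTo T w) := by
  simp only [edgesTo, Finset.disjoint_left, Finset.mem_image]
  rintro _ ⟨u, -, rfl⟩ ⟨u', hu', h⟩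
  rcases Sym2.eq_iff.1 h with ⟨-, h⟩ | ⟨rfl, -⟩
  exacts [hvw h.symm, hv hu']

theorem disjoint_edgesTo_self {S T : Finset (Fin n)} {v : Fin n} (hST : Disjoint S T)
    (hv : v ∉ S) : Disjoint (edgesTo S v) (edgesTo T v) := by
  simp only [edgesTo, Finset.disjoint_left, Finset.mem_image]
  rintro _ ⟨u, hu, rfl⟩ ⟨u', hu', h⟩
  rcases Sym2.eq_iff.1 h with ⟨rfl, -⟩ | ⟨-, rfl⟩
  exacts [Finset.disjoint_left.1 hST hu hu', hv hu]

theorem dependsOn_mem_neighborEvent (S : Finset (Fin n)) (v : Fin n) :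
    DependsOn (· ∈ neighborEvent S v) (edgesTo S v) := by
  intro σ τ h
  simp only [neighborEvent, Set.mem_ofPred_eq, eq_iff_iff]
  exact exists_congr fun u => and_congr_right fun hu => by rw [h _ (Finset.mem_image_of_mem _ hu)]

theorem erMeasure_neighborEvent {S : Finset (Fin n)} {v : Fin n} (hv : v ∉ S) :
    erMeasure n p hp (neighborEvent S v) = 1 - (1 - p) ^ #S := by
  have hcompl : (neighborEvent S v)ᶜ = {σ | ∀ e ∈ edgesTo S v, σ e = false} := by
    ext σ; simp [neighborEvent, edgesTo]
  rw [← compl_compl (neighborEvent S v), prob_compl_eq_one_sub MeasurableSet.of_discrete, hcompl,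
    erMeasure_forall_eq_false, card_edgesTo hv]

theorem erMeasure_neighborEvent_inter {S T : Finset (Fin n)} {v : Fin n} (hST : Disjoint S T)
    (hvS : v ∉ S) (hvT : v ∉ T) :
    erMeasure n p hp (neighborEvent S v ∩ neighborEvent T v)
      = (1 - (1 - p) ^ #S) * (1 - (1 - p) ^ #T) := by
  rw [← erMeasure_neighborEvent (hp := hp) hvS, ← erMeasure_neighborEvent (hp := hp) hvT]
  exact Measure.pi_inter_eq_mul_of_dependsOn _ (disjoint_edgesTo_self hST hvS)
    (dependsOn_mem_neighborEvent S v) (dependsOn_mem_neighborEvent T v)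

theorem dominatingEvent_eq_biInter (S : Finset (Fin n)) :
    dominatingEvent S = ⋂ v ∈ Sᶜ, neighborEvent S v := by
  ext σ
  simp only [dominatingEvent, Dominates, graphOf, neighborEvent, Set.mem_iInter, Finset.mem_compl,
    Set.mem_ofPred_eq]
  exact forall₂_congr fun v hv => exists_congr fun u => and_congr_right fun hu =>
    and_iff_right (ne_of_mem_of_not_mem hu hv)

theorem erMeasure_dominatingEvent (S : Finset (Fin n)) :
    erMeasure n p hp (dominatingEvent S) = (1 - (1 - p) ^ #S) ^ (n - #S) := by
  rw [dominatingEvent_eq_biInter]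
  calc erMeasure n p hp (⋂ v ∈ Sᶜ, neighborEvent S v)
      = ∏ v ∈ Sᶜ, erMeasure n p hp (neighborEvent S v) :=
        Measure.pi_biInter_eq_prod_of_dependsOn _ _ (E := edgesTo S)
          (fun v hv w _ hvw => disjoint_edgesTo hvw (Finset.mem_compl.1 hv))
          fun v _ => dependsOn_mem_neighborEvent S v
    _ = _ := by
        rw [Finset.prod_congr rfl fun v hv => erMeasure_neighborEvent (Finset.mem_compl.1 hv),
          Finset.prod_const, Finset.card_compl, Fintype.card_fin]

theorem erMeasure_dominatingEvent_inter_le {S T : Finset (Fin n)} (hST : Disjoint S T) :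
    erMeasure n p hp (dominatingEvent S ∩ dominatingEvent T)
      ≤ ((1 - (1 - p) ^ #S) * (1 - (1 - p) ^ #T)) ^ (n - (#S + #T)) := by
  have hsub : dominatingEvent S ∩ dominatingEvent T
      ⊆ ⋂ v ∈ (S ∪ T)ᶜ, neighborEvent S v ∩ neighborEvent T v := by
    simp only [dominatingEvent_eq_biInter, Set.subset_def, Set.mem_inter_iff, Set.mem_iInter,
      Finset.mem_compl, Finset.mem_union, not_or]
    exact fun σ hσ v hv => ⟨hσ.1 v hv.1, hσ.2 v hv.2⟩
  calc erMeasure n p hp (dominatingEvent S ∩ dominatingEvent T)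
      ≤ erMeasure n p hp (⋂ v ∈ (S ∪ T)ᶜ, neighborEvent S v ∩ neighborEvent T v) :=
        measure_mono hsub
    _ = ∏ v ∈ (S ∪ T)ᶜ, erMeasure n p hp (neighborEvent S v ∩ neighborEvent T v) := by
        refine Measure.pi_biInter_eq_prod_of_dependsOn _ _
          (E := fun v => edgesTo S v ∪ edgesTo T v) (fun v hv w _ hvw => ?_) fun v _ σ τ h => ?_
        · obtain ⟨hvS, hvT⟩ := Finset.notMem_union.1 (Finset.mem_compl.1 hv)
          simp only [Function.onFun, Finset.disjoint_union_left, Finset.disjoint_union_right]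
          refine ⟨⟨?_, ?_⟩, ?_, ?_⟩ <;> apply disjoint_edgesTo hvw <;> assumption
        · exact congrArg₂ And
            (dependsOn_mem_neighborEvent S v fun e he => h e (Finset.mem_union_left _ he))
            (dependsOn_mem_neighborEvent T v fun e he => h e (Finset.mem_union_right _ he))
    _ = _ := by
        rw [Finset.prod_congr rfl fun v hv =>
            have hv' := Finset.notMem_union.1 (Finset.mem_compl.1 hv)
            erMeasure_neighborEvent_inter hST hv'.1 hv'.2,
          prod_const, card_compl, Fintype.card_fin, card_union_of_disjoint hST]

theorem erMeasure_real_dominatingEvent (S : Finset (Fin n)) :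
    (erMeasure n p hp).real (dominatingEvent S) = (1 - (1 - p).toReal ^ #S) ^ (n - #S) := by
  rw [measureReal_def, erMeasure_dominatingEvent, ENNReal.toReal_pow,
    ENNReal.toReal_one_sub_one_sub_pow]

theorem erMeasure_real_dominatingEvent_inter_le {S T : Finset (Fin n)} (hST : Disjoint S T) :
    (erMeasure n p hp).real (dominatingEvent S ∩ dominatingEvent T)
      ≤ ((1 - (1 - p).toReal ^ #S) * (1 - (1 - p).toReal ^ #T)) ^ (n - (#S + #T)) := by
  refine (ENNReal.toReal_mono ?_ (erMeasure_dominatingEvent_inter_le hST)).trans_eq ?_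
  · exact ENNReal.pow_ne_top (ENNReal.mul_ne_top (by simp) (by simp))
  · rw [ENNReal.toReal_pow, ENNReal.toReal_mul, ENNReal.toReal_one_sub_one_sub_pow,
      ENNReal.toReal_one_sub_one_sub_pow]

theorem erMeasure_real_inter_sub_mul_le {γ : ℕ} {S T : Finset (Fin n)} (hS : #S = γ)
    (hT : #T = γ) (hST : Disjoint S T) :
    (erMeasure n p hp).real (dominatingEvent S ∩ dominatingEvent T)
        - (erMeasure n p hp).real (dominatingEvent S) * (erMeasure n p hp).real (dominatingEvent T)
      ≤ 2 * γ * (1 - p).toReal ^ γ := by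
  set q := (1 - p).toReal ^ γ
  have hq0 : 0 ≤ q := by positivity
  have hq1 : q ≤ 1 := pow_le_one₀ ENNReal.toReal_nonneg (ENNReal.toReal_one_sub_le_one p)
  have hn : 2 * γ ≤ n := by
    have := card_le_univ (S ∪ T)
    rw [card_union_of_disjoint hST, hS, hT, Fintype.card_fin] at this
    omega
  set x := (1 - q) * (1 - q)
  have hx0 : 0 ≤ x := by positivity
  have hx1 : x ≤ 1 := mul_le_one₀ (by linarith) (by linarith) (by linarith)
  have hbernoulli : 1 - 2 * γ * q ≤ x ^ γ := by
    have := one_add_mul_sub_le_pow (a := 1 - q) (by linarith) (2 * γ)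
    rw [show x ^ γ = (1 - q) ^ (2 * γ) by rw [pow_mul, sq]]
    push_cast at this
    linarith
  have hinter := erMeasure_real_dominatingEvent_inter_le (hp := hp) hST
  rw [hS, hT, ← two_mul] at hinter
  rw [erMeasure_real_dominatingEvent, erMeasure_real_dominatingEvent, hS, hT, ← mul_pow,
    show n - γ = (n - 2 * γ) + γ by omega, pow_add]
  change _ ≤ x ^ (n - 2 * γ) at hinter
  change _ - x ^ (n - 2 * γ) * x ^ γ ≤ 2 * γ * q
  nlinarith [mul_le_mul_of_nonneg_right (pow_le_one₀ (n := n - 2 * γ) hx0 hx1)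
    (sub_nonneg.2 (pow_le_one₀ (n := γ) hx0 hx1))]

theorem domCount_eq_sum_indicator (γ : ℕ) (σ : Sym2 (Fin n) → Bool) :
    (domCount (graphOf σ) γ : ℝ)
      = ∑ S ∈ powersetCard γ univ, (dominatingEvent S).indicator 1 σ := by
  classical
  rw [domCount, card_filter, Nat.cast_sum]
  refine sum_congr rfl fun S _ => ?_
  by_cases h : Dominates (graphOf σ) S <;> simp [h, dominatingEvent]

theorem integral_domCount (γ : ℕ) :
    ∫ σ, (domCount (graphOf σ) γ : ℝ) ∂erMeasure n p hp
      = ∑ S ∈ powersetCard γ univ, (erMeasure n p hp).real (dominatingEvent S) := by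
  simp_rw [domCount_eq_sum_indicator]
  rw [integral_finsetSum _ fun _ _ => Integrable.of_finite]
  simp [integral_indicator_one MeasurableSet.of_discrete]

theorem integral_domCount_sq (γ : ℕ) :
    ∫ σ, (domCount (graphOf σ) γ : ℝ) ^ 2 ∂erMeasure n p hp
      = ∑ S ∈ powersetCard γ univ, ∑ T ∈ powersetCard γ univ,
          (erMeasure n p hp).real (dominatingEvent S ∩ dominatingEvent T) := by
  have hprod (S T : Finset (Fin n)) (σ : Sym2 (Fin n) → Bool) :
      (dominatingEvent S).indicator 1 σ * (dominatingEvent T).indicator 1 σ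
        = (dominatingEvent S ∩ dominatingEvent T).indicator
            (1 : (Sym2 (Fin n) → Bool) → ℝ) σ := by
    rw [Set.inter_indicator_one, Pi.mul_apply]
  simp_rw [domCount_eq_sum_indicator, sq, sum_mul_sum, hprod]
  rw [integral_finsetSum _ fun _ _ => Integrable.of_finite]
  refine sum_congr rfl fun S _ => ?_
  rw [integral_finsetSum _ fun _ _ => Integrable.of_finite]
  simp [integral_indicator_one MeasurableSet.of_discrete]

theorem integral_domCount_sq_sub_sq_le {γ : ℕ} (hγ : 0 < γ)
    (hq : n * (1 - p).toReal ^ γ ≤ 1) :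
    ∫ σ, (domCount (graphOf σ) γ : ℝ) ^ 2 ∂erMeasure n p hp
        - (∫ σ, (domCount (graphOf σ) γ : ℝ) ∂erMeasure n p hp) ^ 2
      ≤ 3 * γ * (n : ℝ) ^ (2 * γ - 1) := by
  set μ := erMeasure n p hp
  set P := powersetCard γ (univ : Finset (Fin n))
  set q := (1 - p).toReal ^ γ
  have hP : (#P : ℝ) ≤ (n : ℝ) ^ γ := by
    rw [card_powersetCard, card_univ, Fintype.card_fin]
    exact_mod_cast Nat.choose_le_pow n γ
  have hpair : ∀ S ∈ P, ∀ T ∈ P,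
      μ.real (dominatingEvent S ∩ dominatingEvent T)
          - μ.real (dominatingEvent S) * μ.real (dominatingEvent T)
        ≤ 2 * γ * q + if Disjoint S T then 0 else 1 := by
    intro S hS T hT
    split_ifs with hST
    · simpa using erMeasure_real_inter_sub_mul_le (mem_powersetCard_univ.1 hS)
        (mem_powersetCard_univ.1 hT) hST
    · have : 0 ≤ 2 * γ * q := by positivity
      nlinarith [measureReal_le_one (μ := μ) (s := dominatingEvent S ∩ dominatingEvent T),
        measureReal_nonneg (μ := μ) (s := dominatingEvent S),
        measureReal_nonneg (μ := μ) (s := dominatingEvent T)]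
  have hrow : ∀ S ∈ P, ∑ T ∈ P, (μ.real (dominatingEvent S ∩ dominatingEvent T)
        - μ.real (dominatingEvent S) * μ.real (dominatingEvent T))
      ≤ #P * (2 * γ * q) + γ * (n : ℝ) ^ (γ - 1) := by
    intro S hS
    have hcount := card_filter_not_disjoint_le S γ
    rw [mem_powersetCard_univ.1 hS, Fintype.card_fin] at hcount
    calc _ ≤ ∑ T ∈ P, (2 * γ * q + if Disjoint S T then 0 else 1) := sum_le_sum (hpair S hS)
      _ = #P * (2 * γ * q) + #{T ∈ P | ¬Disjoint S T} := by
        simp [sum_add_distrib, sum_ite, nsmul_eq_mul]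
      _ ≤ #P * (2 * γ * q) + γ * (n : ℝ) ^ (γ - 1) := by
        gcongr
        exact_mod_cast hcount
  have hnq : (n : ℝ) ^ γ * q ≤ (n : ℝ) ^ (γ - 1) := by
    rw [← Nat.sub_add_cancel hγ, pow_succ, Nat.add_sub_cancel, mul_assoc]
    exact mul_le_of_le_one_right (by positivity) hq
  rw [integral_domCount_sq, integral_domCount, sq, sum_mul_sum, ← sum_sub_distrib]
  simp_rw [← sum_sub_distrib]
  calc _ ≤ ∑ _S ∈ P, (#P * (2 * γ * q) + γ * (n : ℝ) ^ (γ - 1)) := sum_le_sum hrow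
    _ = #P * (#P * (2 * γ * q) + γ * (n : ℝ) ^ (γ - 1)) := by rw [sum_const, nsmul_eq_mul]
    _ ≤ (n : ℝ) ^ γ * ((n : ℝ) ^ γ * (2 * γ * q) + γ * (n : ℝ) ^ (γ - 1)) := by
        gcongr
    _ ≤ (n : ℝ) ^ γ * (3 * γ * (n : ℝ) ^ (γ - 1)) := by
        gcongr
        nlinarith
    _ = 3 * γ * (n : ℝ) ^ (2 * γ - 1) := by
        rw [show 2 * γ - 1 = γ + (γ - 1) by omega, pow_add]
        ring

theorem choose_sub_integral_domCount_le (γ : ℕ) :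
    (n.choose γ : ℝ) - ∫ σ, (domCount (graphOf σ) γ : ℝ) ∂erMeasure n p hp
      ≤ (n : ℝ) ^ γ * (n * (1 - p).toReal ^ γ) := by
  set q := (1 - p).toReal ^ γ
  have hq0 : 0 ≤ q := by positivity
  have hq1 : q ≤ 1 := pow_le_one₀ ENNReal.toReal_nonneg (ENNReal.toReal_one_sub_le_one p)
  have hbernoulli := one_add_mul_sub_le_pow (a := 1 - q) (by linarith) (n - γ)
  have hnγ : ((n - γ : ℕ) : ℝ) ≤ n := by exact_mod_cast Nat.sub_le n γ
  rw [integral_domCount, sum_congr rfl fun S hS => by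
      rw [erMeasure_real_dominatingEvent, mem_powersetCard_univ.1 hS],
    sum_const, card_powersetCard, card_univ, Fintype.card_fin, nsmul_eq_mul]
  calc (n.choose γ : ℝ) - n.choose γ * (1 - q) ^ (n - γ)
      = n.choose γ * (1 - (1 - q) ^ (n - γ)) := by ring
    _ ≤ (n : ℝ) ^ γ * (n * q) := by
        refine mul_le_mul (mod_cast Nat.choose_le_pow n γ) ?_
          (sub_nonneg.2 (pow_le_one₀ (by linarith) (by linarith))) (by positivity)
        nlinarith [mul_le_mul_of_nonneg_right hnγ hq0]

theorem one_sub_div_le_measureReal_domCount {γ : ℕ} (hγ : 0 < γ) (hn : 0 < n)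
    (hr : 0 < (1 - p).toReal) (hq : n * (1 - p).toReal ^ γ ≤ 1) :
    1 - 3 * γ / ((n : ℝ) ^ 3 * ((1 - p).toReal ^ γ) ^ 2)
      ≤ (erMeasure n p hp).real
          {σ | (n.choose γ : ℝ) - 2 * ((n : ℝ) ^ γ * (n * (1 - p).toReal ^ γ))
            ≤ domCount (graphOf σ) γ} := by
  set q := (1 - p).toReal ^ γ
  set L := (n : ℝ) ^ γ * (n * q) with hLdef
  have hL : 0 < L := by positivity
  have hX : MemLp (fun σ => (domCount (graphOf σ) γ : ℝ)) 2 (erMeasure n p hp) := .of_discrete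
  have hcheb := one_sub_variance_div_sq_le_measureReal hX hL
    (c := n.choose γ - 2 * L)
    (by linarith [choose_sub_integral_domCount_le (n := n) (hp := hp) γ])
  rw [variance_eq_sub hX] at hcheb
  simp only [Pi.pow_apply] at hcheb
  refine le_trans ?_ hcheb
  have hratio : 3 * γ / ((n : ℝ) ^ 3 * q ^ 2) = 3 * γ * (n : ℝ) ^ (2 * γ - 1) / L ^ 2 := by
    have hpow : (n : ℝ) ^ γ * (n : ℝ) ^ γ = (n : ℝ) ^ (2 * γ - 1) * n := by
      rw [← pow_add, ← pow_succ]
      congr 1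
      omega
    rw [div_eq_div_iff (by positivity) (by positivity), hLdef]
    linear_combination (3 * γ * (n : ℝ) ^ 2 * q ^ 2) * hpow
  rw [hratio]
  gcongr
  exact integral_domCount_sq_sub_sq_le hγ hq

end ErdosRenyi

noncomputable def nonEdgeProb (γ n : ℕ) : ℝ :=
  Real.log n / (n : ℝ) ^ ((1 : ℝ) / ((γ : ℝ) - 1))

theorem Real.rpow_one_div_sub_one_pow {γ : ℕ} (hγ : 2 ≤ γ) {x : ℝ} (hx : 0 < x) :
    (x ^ ((1 : ℝ) / ((γ : ℝ) - 1))) ^ γ = x * x ^ ((1 : ℝ) / ((γ : ℝ) - 1)) := by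
  have hγ' : 0 < (γ : ℝ) - 1 := by
    have : (2 : ℝ) ≤ γ := by exact_mod_cast hγ
    linarith
  rw [← Real.rpow_natCast, ← Real.rpow_mul hx.le,
    ← Real.rpow_one_add' hx.le (add_pos one_pos (one_div_pos.2 hγ')).ne']
  congr 1
  field_simp
  ring

section NonEdgeProb

variable {γ : ℕ}

theorem nonEdgeProb_pow (hγ : 2 ≤ γ) {n : ℕ} (hn : 0 < n) :
    nonEdgeProb γ n ^ γ
      = Real.log n ^ γ / (n * (n : ℝ) ^ ((1 : ℝ) / ((γ : ℝ) - 1))) := by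
  rw [nonEdgeProb, div_pow, Real.rpow_one_div_sub_one_pow hγ (by exact_mod_cast hn)]

theorem natCast_mul_nonEdgeProb_pow (hγ : 2 ≤ γ) {n : ℕ} (hn : 0 < n) :
    n * nonEdgeProb γ n ^ γ = Real.log n ^ γ / (n : ℝ) ^ ((1 : ℝ) / ((γ : ℝ) - 1)) := by
  have : (0 : ℝ) < n := by exact_mod_cast hn
  rw [nonEdgeProb_pow hγ hn]
  field_simp

theorem tendsto_natCast_mul_nonEdgeProb_pow (hγ : 2 ≤ γ) :
    Tendsto (fun n : ℕ => n * nonEdgeProb γ n ^ γ) atTop (𝓝 0) := by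
  have hc : 0 < (1 : ℝ) / ((γ : ℝ) - 1) := one_div_pos.2 (by
    have : (2 : ℝ) ≤ γ := by exact_mod_cast hγ
    linarith)
  refine (((isLittleO_log_rpow_rpow_atTop (γ : ℝ) hc).tendsto_div_nhds_zero).comp
    tendsto_natCast_atTop_atTop).congr' ((eventually_gt_atTop 0).mono fun n hn => ?_)
  simp [Real.rpow_natCast, natCast_mul_nonEdgeProb_pow hγ hn]

theorem pow_mul_natCast_mul_nonEdgeProb_pow (hγ : 2 ≤ γ) {n : ℕ} (hn : 0 < n) :
    (n : ℝ) ^ γ * (n * nonEdgeProb γ n ^ γ)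
      = Real.log n ^ γ * (n : ℝ) ^ ((γ : ℝ) - 1 / ((γ : ℝ) - 1)) := by
  have : (0 : ℝ) < n := by exact_mod_cast hn
  rw [natCast_mul_nonEdgeProb_pow hγ hn, Real.rpow_sub this, Real.rpow_natCast]
  ring

theorem tendsto_natCast_pow_three_mul_nonEdgeProb_pow_sq (hγ : 3 ≤ γ) :
    Tendsto (fun n : ℕ => (n : ℝ) ^ 3 * (nonEdgeProb γ n ^ γ) ^ 2) atTop atTop := by
  have hlog : Tendsto (fun n : ℕ => Real.log n ^ (2 * γ)) atTop atTop :=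
    (tendsto_pow_atTop (by omega)).comp (Real.tendsto_log_atTop.comp tendsto_natCast_atTop_atTop)
  refine tendsto_atTop_mono' atTop ((eventually_gt_atTop 0).mono fun n hn => ?_) hlog
  have hn' : (1 : ℝ) ≤ n := by exact_mod_cast hn
  show _ ≤ (n : ℝ) ^ 3 * (nonEdgeProb γ n ^ γ) ^ 2
  rw [nonEdgeProb_pow (by omega) hn]
  set B := (n : ℝ) ^ ((1 : ℝ) / ((γ : ℝ) - 1))
  have hB : 0 < B := by positivity
  have hB2 : B ^ 2 ≤ n := by
    have hc : 2 * ((1 : ℝ) / ((γ : ℝ) - 1)) ≤ 1 := by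
      have : (1 : ℝ) / ((γ : ℝ) - 1) ≤ 1 / 2 :=
        one_div_le_one_div_of_le (by norm_num) (by
          have : (3 : ℝ) ≤ γ := by exact_mod_cast hγ
          linarith)
      linarith
    calc B ^ 2 = (n : ℝ) ^ (2 * ((1 : ℝ) / ((γ : ℝ) - 1))) := by
          rw [← Real.rpow_natCast, ← Real.rpow_mul (by positivity), mul_comm]
          norm_num
      _ ≤ (n : ℝ) ^ (1 : ℝ) := Real.rpow_le_rpow_of_exponent_le hn' hc
      _ = n := Real.rpow_one _
  have hsimp : (n : ℝ) ^ 3 * (Real.log n ^ γ / (n * B)) ^ 2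
      = Real.log n ^ (2 * γ) * (n / B ^ 2) := by
    field_simp
    ring
  rw [hsimp]
  exact le_mul_of_one_le_right (by positivity) ((one_le_div (by positivity)).2 hB2)

theorem eventually_nonEdgeProb (hγ : 2 ≤ γ) :
    ∀ᶠ n : ℕ in atTop, 0 < n ∧ 0 < nonEdgeProb γ n ∧ nonEdgeProb γ n ≤ 1
      ∧ n * nonEdgeProb γ n ^ γ ≤ 1 := by
  filter_upwards [eventually_ge_atTop 2,
    (tendsto_natCast_mul_nonEdgeProb_pow hγ).eventually (Iic_mem_nhds zero_lt_one)] with n hn hq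
  have hn' : (2 : ℝ) ≤ n := by exact_mod_cast hn
  have h0 : 0 < nonEdgeProb γ n := div_pos (Real.log_pos (by linarith)) (by positivity)
  refine ⟨by omega, h0, (pow_le_one_iff_of_nonneg h0.le (show γ ≠ 0 by omega)).1 ?_, hq⟩
  nlinarith [pow_pos h0 γ, show (n : ℝ) * nonEdgeProb γ n ^ γ ≤ 1 from hq]

end NonEdgeProb

/-- For `γ ≥ 3` and `ε_n = log n / n^(1/(γ-1))`, the number `X_γ` of dominating
`γ`-sets in `G(n, 1-ε_n)` has variance `O(n^(2γ-1))`, and with probability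
tending to 1, `X_γ ≥ C(n,γ) - O(log^γ n · n^(γ-1/(γ-1)))`. -/
theorem stmt16 (γ : ℕ) (hγ : 3 ≤ γ) :
    (∃ C : ℝ, ∃ N : ℕ, ∀ n : ℕ, N ≤ n →
      (∫ σ, ((domCount (graphOf σ) γ : ℝ)) ^ 2
          ∂ erMeasure n
            (1 - ENNReal.ofReal (Real.log n / (n : ℝ) ^ ((1 : ℝ) / ((γ : ℝ) - 1))))
            tsub_le_self) -
        (∫ σ, (domCount (graphOf σ) γ : ℝ)
          ∂ erMeasure n
            (1 - ENNReal.ofReal (Real.log n / (n : ℝ) ^ ((1 : ℝ) / ((γ : ℝ) - 1))))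
            tsub_le_self) ^ 2 ≤
        C * (n : ℝ) ^ (2 * γ - 1)) ∧
    (∃ C : ℝ, Tendsto
      (fun n : ℕ =>
        (erMeasure n
            (1 - ENNReal.ofReal (Real.log n / (n : ℝ) ^ ((1 : ℝ) / ((γ : ℝ) - 1))))
            tsub_le_self
          {σ | (Nat.choose n γ : ℝ) -
              C * Real.log n ^ γ * (n : ℝ) ^ ((γ : ℝ) - 1 / ((γ : ℝ) - 1)) ≤
            (domCount (graphOf σ) γ : ℝ)}).toReal)
      atTop (nhds 1)) := by
  have hev := eventually_nonEdgeProb (γ := γ) (by omega)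
  constructor
  · obtain ⟨N, hN⟩ := eventually_atTop.1 hev
    refine ⟨3 * γ, N, fun n hn => ?_⟩
    obtain ⟨-, h0, h1, hq⟩ := hN n hn
    exact ErdosRenyi.integral_domCount_sq_sub_sq_le (p := 1 - ENNReal.ofReal (nonEdgeProb γ n))
      (by omega) (by rwa [ENNReal.toReal_one_sub_one_sub_ofReal h0.le h1])
  · refine ⟨2, tendsto_of_tendsto_of_tendsto_of_le_of_le'
      (g := fun n : ℕ => 1 - 3 * γ / ((n : ℝ) ^ 3 * (nonEdgeProb γ n ^ γ) ^ 2))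
      ?_ tendsto_const_nhds ?_ (.of_forall fun n => measureReal_le_one)⟩
    · simpa using tendsto_const_nhds.sub
        (tendsto_const_nhds.div_atTop (tendsto_natCast_pow_three_mul_nonEdgeProb_pow_sq hγ))
    · filter_upwards [hev] with n ⟨hn, h0, h1, hq⟩
      have hr := ENNReal.toReal_one_sub_one_sub_ofReal h0.le h1
      have := ErdosRenyi.one_sub_div_le_measureReal_domCount
        (n := n) (p := 1 - ENNReal.ofReal (nonEdgeProb γ n)) (hp := tsub_le_self) (γ := γ)
        (by omega) hn (by rwa [hr]) (by rwa [hr])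
      rwa [hr, pow_mul_natCast_mul_nonEdgeProb_pow (by omega) hn, ← mul_assoc] at this
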